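/- Let P_{Y|X} be a channel with binary input and output alphabets, Range(X) = Range(Y) = {0,1}, satisfying ε-differential privacy: P_{Y|X}(y|x) ≤ e^{ε}·P_{Y|X}(y|x') for all y, x, x' ∈ {0,1}. Then its min-entropy-based maximal leakage satisfies ML(P_{Y|X}) ≤ log₂(2e^{ε}/(1 + e^{ε})). -/
import Mathlib


open Real
open scoped BigOperators

/-- The min-entropy leakage `H_∞(X) − H_∞(X|Y)` of a channel `Q` with binary input
`X ∈ {0,1}` under the input distribution `PX`, where
`H_∞(X) = −log₂ max_x PX(x)` and `H_∞(X|Y) = −log₂ Σ_y max_x PX(x)·Q(y|x)`. -/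
noncomputable def minEntLeakage {𝒴 : Type*} [Fintype 𝒴]
    (PX : Bool → ℝ) (Q : Bool → 𝒴 → ℝ) : ℝ :=
  logb 2 (∑ y, max (PX false * Q false y) (PX true * Q true y)) -
    logb 2 (max (PX false) (PX true))

/-- If a channel with binary input and binary output satisfies `ε`-differential
privacy (`P_{Y|X}(y|x) ≤ e^{ε}·P_{Y|X}(y|x')` for all `y, x, x'`), then its
min-entropy-based maximal leakage `ML(P_{Y|X}) = max_{P_X} (H_∞(X) − H_∞(X|Y))`
is at most `log₂(2e^{ε}/(1 + e^{ε}))`. -/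
theorem maximal_leakage_le_of_dp_binary
    (Q : Bool → Bool → ℝ) (ε : ℝ)
    (hQ0 : ∀ x y, 0 ≤ Q x y) (hQ1 : ∀ x, ∑ y, Q x y = 1)
    (hDP : ∀ (y x x' : Bool), Q x y ≤ exp ε * Q x' y) :
    ∀ PX : Bool → ℝ, (∀ x, 0 ≤ PX x) → (PX false + PX true = 1) →
      minEntLeakage PX Q ≤ logb 2 (2 * exp ε / (1 + exp ε)) := by
  intro PX hPX hsum
  set E := exp ε with hE
  have hE0 : (0:ℝ) < E := exp_pos ε
  have hab : Q false true + Q false false = 1 := by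
    have := hQ1 false; simpa [Fintype.sum_bool] using this
  have hcd : Q true true + Q true false = 1 := by
    have := hQ1 true; simpa [Fintype.sum_bool] using this
  have hE1 : (1:ℝ) ≤ E := by
    by_contra h
    push_neg at h
    have h0 : ∀ y, Q false y = 0 := by
      intro y
      have h1 := hDP y false false
      nlinarith [hQ0 false y]
    rw [h0 true, h0 false] at hab
    norm_num at hab
  have h1E : (0:ℝ) < 1 + E := by linarith
  -- the key inequality on the channel
  have key : max (Q false false) (Q true false) + max (Q false true) (Q true true)
      ≤ 2 * E / (1 + E) := by
    rw [le_div_iff₀ h1E]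
    rcases max_cases (Q false false) (Q true false) with ⟨h1, h1'⟩ | ⟨h1, h1'⟩ <;>
      rcases max_cases (Q false true) (Q true true) with ⟨h2, h2'⟩ | ⟨h2, h2'⟩ <;>
      rw [h1, h2] <;>
      nlinarith [hDP false false true, hDP false true false, hDP true false true,
        hDP true true false, hQ0 false false, hQ0 false true, hQ0 true false, hQ0 true true]
  set M := max (PX false) (PX true) with hMdef
  have hM : 0 < M := by
    rcases max_cases (PX false) (PX true) with ⟨h, h'⟩ | ⟨h, h'⟩ <;> rw [hMdef, h] <;> linarith
  set S := ∑ y, max (PX false * Q false y) (PX true * Q true y) with hSdef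
  have hSeq : S = max (PX false * Q false true) (PX true * Q true true) +
      max (PX false * Q false false) (PX true * Q true false) := by
    rw [hSdef, Fintype.sum_bool]
  have hSf : PX false ≤ S := by
    have h1 : PX false * Q false true ≤ max (PX false * Q false true) (PX true * Q true true) :=
      le_max_left _ _
    have h2 : PX false * Q false false ≤ max (PX false * Q false false) (PX true * Q true false) :=
      le_max_left _ _
    have e : PX false * Q false true + PX false * Q false false = PX false := by
      rw [← mul_add, hab, mul_one]
    linarith
  have hSt : PX true ≤ S := by
    have h1 : PX true * Q true true ≤ max (PX false * Q false true) (PX true * Q true true) :=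
      le_max_right _ _
    have h2 : PX true * Q true false ≤ max (PX false * Q false false) (PX true * Q true false) :=
      le_max_right _ _
    have e : PX true * Q true true + PX true * Q true false = PX true := by
      rw [← mul_add, hcd, mul_one]
    linarith
  have hS : 0 < S := by
    rcases max_cases (PX false) (PX true) with ⟨h, h'⟩ | ⟨h, h'⟩
    · calc (0:ℝ) < M := hM
        _ = PX false := h
        _ ≤ S := hSf
    · calc (0:ℝ) < M := hM
        _ = PX true := h
        _ ≤ S := hSt
  have hstep : S ≤ M * (max (Q false false) (Q true false) + max (Q false true) (Q true true)) := by
    have t1 : max (PX false * Q false false) (PX true * Q true false)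
        ≤ M * max (Q false false) (Q true false) := by
      apply max_le
      · exact mul_le_mul (le_max_left _ _) (le_max_left _ _) (hQ0 false false) hM.le
      · exact mul_le_mul (le_max_right _ _) (le_max_right _ _) (hQ0 true false) hM.le
    have t2 : max (PX false * Q false true) (PX true * Q true true)
        ≤ M * max (Q false true) (Q true true) := by
      apply max_le
      · exact mul_le_mul (le_max_left _ _) (le_max_left _ _) (hQ0 false true) hM.le
      · exact mul_le_mul (le_max_right _ _) (le_max_right _ _) (hQ0 true true) hM.le
    rw [hSeq]; linarith [mul_add M (max (Q false false) (Q true false))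
      (max (Q false true) (Q true true))]
  have hfinal : S ≤ M * (2 * E / (1 + E)) :=
    le_trans hstep (mul_le_mul_of_nonneg_left key hM.le)
  have hC : (0:ℝ) < 2 * E / (1 + E) := by positivity
  unfold minEntLeakage
  rw [← hSdef, ← hMdef, sub_le_iff_le_add]
  calc logb 2 S ≤ logb 2 (M * (2 * E / (1 + E))) := by
        exact Real.logb_le_logb_of_le (by norm_num) hS hfinal
    _ = logb 2 (2 * E / (1 + E)) + logb 2 M := by
        rw [Real.logb_mul (ne_of_gt hM) (ne_of_gt hC)]; ring
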